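/- Suppose every Q ∈ 𝐐 satisfies instrument exogeneity and generalized monotonicity, and 𝐐 satisfies unrestricted potential outcomes. Let P satisfy P{Z = z} > 0 for all z ∈ 𝒵 and 𝐐₀(P, 𝐐) ≠ ∅, and for each d ∈ 𝒟 let z*(d) ∈ 𝒵 be any maximizer of z ↦ P{D = d | Z = z}. Then Θ₀(P, 𝐐) equals the product over d ∈ 𝒟 of the closed intervals [β_{d|z*(d)} + y^L(1 − Σ_{y∈𝒴} p_{yd|z*(d)}), β_{d|z*(d)} + y^U(1 − Σ_{y∈𝒴} p_{yd|z*(d)})]. -/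
import Mathlib


open Finset

/-- A probability mass function on a finite type. -/
structure ProbMass (α : Type) [Fintype α] where
  mass : α → ℝ
  nonneg : ∀ a, 0 ≤ mass a
  total : ∑ a, mass a = 1

/-- Probability of an event under a probability mass function. -/
noncomputable def pr {α : Type} [Fintype α] (Q : ProbMass α) (A : Set α) : ℝ :=
  ∑ a, A.indicator Q.mass a

/-- Expectation of a real-valued function under a probability mass function. -/
noncomputable def expect {α : Type} [Fintype α] (Q : ProbMass α) (f : α → ℝ) : ℝ :=
  ∑ a, Q.mass a * f a

/-- The latent space: potential outcomes `(Y_d)_{d ∈ D}` taking values in the finite set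
`𝒴 ⊂ ℝ`, potential treatments `(D_z)_{z ∈ Z}`, and the instrument `Z`. -/
abbrev Latent (𝒴 : Finset ℝ) (D Z : Type) : Type := (D → ↥𝒴) × (Z → D) × Z

/-- The observed space: `(Y, D, Z)`. -/
abbrev Obs (𝒴 : Finset ℝ) (D Z : Type) : Type := ↥𝒴 × D × Z

variable {𝒴 : Finset ℝ} {D Z : Type} [Fintype D] [DecidableEq D] [Fintype Z] [DecidableEq Z]

/-- The map `T` sending `((y_d), (d_z), z)` to `(y_{d_z}, d_z, z)`. -/
def Tmap (ω : Latent 𝒴 D Z) : Obs 𝒴 D Z := (ω.1 (ω.2.1 ω.2.2), ω.2.1 ω.2.2, ω.2.2)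

/-- `Q` rationalizes `P`: `P = Q ∘ T⁻¹`. -/
def Rationalizes (Q : ProbMass (Latent 𝒴 D Z)) (P : ProbMass (Obs 𝒴 D Z)) : Prop :=
  ∀ o : Obs 𝒴 D Z, P.mass o = pr Q {ω | Tmap ω = o}

/-- Instrument exogeneity: `((Y_d), (D_z))` is independent of `Z` under `Q`. -/
def Exog (Q : ProbMass (Latent 𝒴 D Z)) : Prop :=
  ∀ (yd : D → ↥𝒴) (dz : Z → D) (z : Z),
    pr Q {ω | ω.1 = yd ∧ ω.2.1 = dz ∧ ω.2.2 = z}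
      = pr Q {ω | ω.1 = yd ∧ ω.2.1 = dz} * pr Q {ω | ω.2.2 = z}

/-- `zs` maximally encourages treatment `d` under `Q`:
`Q{D_{zs} ≠ d and D_{z'} = d for some z'} = 0`. -/
def MaxEnc (Q : ProbMass (Latent 𝒴 D Z)) (d : D) (zs : Z) : Prop :=
  pr Q {ω | ω.2.1 zs ≠ d ∧ ∃ z' : Z, ω.2.1 z' = d} = 0

/-- Generalized monotonicity. -/
def GenMono (Q : ProbMass (Latent 𝒴 D Z)) : Prop :=
  ∀ d : D, ∃ zs : Z, MaxEnc Q d zs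

/-- `θ(Q) = (E_Q[Y_d])_{d ∈ D}`, the vector of average potential outcomes. -/
noncomputable def theta (Q : ProbMass (Latent 𝒴 D Z)) : D → ℝ :=
  fun d => expect Q fun ω => (ω.1 d : ℝ)

/-- `𝐐₀(P, 𝐐)`: the set of `Q ∈ 𝐐` that rationalize `P`. -/
def Q0 (P : ProbMass (Obs 𝒴 D Z)) (QQ : Set (ProbMass (Latent 𝒴 D Z))) :
    Set (ProbMass (Latent 𝒴 D Z)) :=
  {Q | Q ∈ QQ ∧ Rationalizes Q P}

/-- `Θ₀(P, 𝐐)`: the identified set for `θ(Q)`. -/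
noncomputable def Theta0 (P : ProbMass (Obs 𝒴 D Z))
    (QQ : Set (ProbMass (Latent 𝒴 D Z))) : Set (D → ℝ) :=
  theta '' Q0 P QQ

/-- Unrestricted potential outcomes: if `Q ∈ 𝐐`, `Q'` is exogenous, and the potential
treatments have the same distribution under `Q'` as under `Q`, then `Q' ∈ 𝐐`. -/
def UnrestrictedPO (QQ : Set (ProbMass (Latent 𝒴 D Z))) : Prop :=
  ∀ Q ∈ QQ, ∀ Q' : ProbMass (Latent 𝒴 D Z), Exog Q' →
    (∀ dz : Z → D, pr Q' {ω | ω.2.1 = dz} = pr Q {ω | ω.2.1 = dz}) → Q' ∈ QQ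

/-- `P{Z = z}`. -/
noncomputable def prZ (P : ProbMass (Obs 𝒴 D Z)) (z : Z) : ℝ :=
  pr P {o | o.2.2 = z}

/-- `P{D = d ∣ Z = z}`. -/
noncomputable def condD (P : ProbMass (Obs 𝒴 D Z)) (d : D) (z : Z) : ℝ :=
  pr P {o | o.2.1 = d ∧ o.2.2 = z} / prZ P z

/-- `p_{yd|z} = P{Y = y, D = d ∣ Z = z}`. -/
noncomputable def pObs (P : ProbMass (Obs 𝒴 D Z)) (y : ℝ) (d : D) (z : Z) : ℝ :=
  pr P {o | (o.1 : ℝ) = y ∧ o.2.1 = d ∧ o.2.2 = z} / prZ P z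

/-- `β_{d|z} = E_P[Y · 1{D = d} ∣ Z = z]`. -/
noncomputable def betaObs (P : ProbMass (Obs 𝒴 D Z)) (d : D) (z : Z) : ℝ :=
  (expect P fun o => if o.2.1 = d ∧ o.2.2 = z then (o.1 : ℝ) else 0) / prZ P z

open Classical in
lemma pr_def {α : Type} [Fintype α] (Q : ProbMass α) (A : Set α) :
    pr Q A = ∑ a, if a ∈ A then Q.mass a else 0 := by
  unfold pr
  apply Finset.sum_congr rfl
  intro a _
  simp [Set.indicator_apply]

lemma sum_zero_on {ι : Type*} [Fintype ι] {f : ι → ℝ} (h0 : ∑ i, f i = 0)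
    (hnn : ∀ i, 0 ≤ f i) (i : ι) : f i = 0 :=
  (Finset.sum_eq_zero_iff_of_nonneg (fun j _ => hnn j)).mp h0 i (Finset.mem_univ i)

/-- marginal over z of the latent mass -/
noncomputable def qm (Q : ProbMass (Latent 𝒴 D Z)) (yd : D → ↥𝒴) (dz : Z → D) : ℝ :=
  ∑ z, Q.mass (yd, dz, z)

/-- marginal of Z under the latent mass -/
noncomputable def rm (Q : ProbMass (Latent 𝒴 D Z)) (z : Z) : ℝ :=
  ∑ yd, ∑ dz, Q.mass (yd, dz, z)

lemma qm_nonneg (Q : ProbMass (Latent 𝒴 D Z)) (yd : D → ↥𝒴) (dz : Z → D) :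
    0 ≤ qm Q yd dz :=
  Finset.sum_nonneg fun z _ => Q.nonneg _

lemma rm_nonneg (Q : ProbMass (Latent 𝒴 D Z)) (z : Z) : 0 ≤ rm Q z :=
  Finset.sum_nonneg fun _ _ => Finset.sum_nonneg fun _ _ => Q.nonneg _

lemma sum_latent (f : Latent 𝒴 D Z → ℝ) :
    ∑ ω, f ω = ∑ yd, ∑ dz, ∑ z, f (yd, dz, z) := by
  rw [Fintype.sum_prod_type]
  exact Finset.sum_congr rfl fun yd _ => Fintype.sum_prod_type _

lemma sum_qm (Q : ProbMass (Latent 𝒴 D Z)) : ∑ yd, ∑ dz, qm Q yd dz = 1 := by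
  rw [← Q.total, sum_latent Q.mass]; rfl

lemma sum_rm (Q : ProbMass (Latent 𝒴 D Z)) : ∑ z, rm Q z = 1 := by
  rw [← Q.total, sum_latent Q.mass]
  unfold rm
  rw [Finset.sum_comm]
  apply Finset.sum_congr rfl
  intro yd _
  rw [Finset.sum_comm]
lemma pr_singleton (Q : ProbMass (Latent 𝒴 D Z)) (yd : D → ↥𝒴) (dz : Z → D) (z : Z) :
    pr Q {ω | ω.1 = yd ∧ ω.2.1 = dz ∧ ω.2.2 = z} = Q.mass (yd, dz, z) := by
  classical
  rw [pr_def, sum_latent]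
  simp only [Set.mem_setOf_eq]
  rw [Finset.sum_eq_single yd]
  · rw [Finset.sum_eq_single dz]
    · rw [Finset.sum_eq_single z]
      · simp
      · intro b _ hb; simp [hb]
      · intro h; exact absurd (Finset.mem_univ z) h
    · intro b _ hb; simp [hb]
    · intro h; exact absurd (Finset.mem_univ dz) h
  · intro b _ hb; simp [hb]
  · intro h; exact absurd (Finset.mem_univ yd) h

lemma pr_margYD (Q : ProbMass (Latent 𝒴 D Z)) (yd : D → ↥𝒴) (dz : Z → D) :
    pr Q {ω | ω.1 = yd ∧ ω.2.1 = dz} = qm Q yd dz := by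
  classical
  rw [pr_def, sum_latent]
  simp only [Set.mem_setOf_eq]
  rw [Finset.sum_eq_single yd]
  · rw [Finset.sum_eq_single dz]
    · simp [qm]
    · intro b _ hb; simp [hb]
    · intro h; exact absurd (Finset.mem_univ dz) h
  · intro b _ hb; simp [hb]
  · intro h; exact absurd (Finset.mem_univ yd) h

lemma pr_margZ (Q : ProbMass (Latent 𝒴 D Z)) (z : Z) :
    pr Q {ω | ω.2.2 = z} = rm Q z := by
  classical
  rw [pr_def, sum_latent]
  unfold rm
  apply Finset.sum_congr rfl; intro yd _
  apply Finset.sum_congr rfl; intro dz _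
  simp only [Set.mem_setOf_eq]
  rw [Finset.sum_eq_single z]
  · simp
  · intro b _ hb; simp [hb]
  · intro h; exact absurd (Finset.mem_univ z) h

lemma mass_factor {Q : ProbMass (Latent 𝒴 D Z)} (hE : Exog Q) (yd : D → ↥𝒴) (dz : Z → D)
    (z : Z) : Q.mass (yd, dz, z) = qm Q yd dz * rm Q z := by
  have := hE yd dz z
  rwa [pr_singleton, pr_margYD, pr_margZ] at this

lemma exog_of_factor {Q : ProbMass (Latent 𝒴 D Z)} (F : (D → ↥𝒴) → (Z → D) → ℝ) (g : Z → ℝ)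
    (h : ∀ yd dz z, Q.mass (yd, dz, z) = F yd dz * g z) : Exog Q := by
  intro yd dz z
  rw [pr_singleton, pr_margYD, pr_margZ, h]
  have hq : qm Q yd dz = F yd dz * ∑ z', g z' := by
    unfold qm
    rw [Finset.mul_sum]
    exact Finset.sum_congr rfl fun z' _ => h yd dz z'
  have hr : rm Q z = (∑ yd', ∑ dz', F yd' dz') * g z := by
    unfold rm
    rw [Finset.sum_mul]
    apply Finset.sum_congr rfl; intro yd' _
    rw [Finset.sum_mul]
    exact Finset.sum_congr rfl fun dz' _ => h yd' dz' z
  have ht : (∑ yd', ∑ dz', F yd' dz') * (∑ z', g z') = 1 := by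
    have := Q.total
    rw [sum_latent] at this
    rw [← this, Finset.sum_mul]
    apply Finset.sum_congr rfl; intro yd' _
    rw [Finset.sum_mul]
    apply Finset.sum_congr rfl; intro dz' _
    rw [Finset.mul_sum]
    exact Finset.sum_congr rfl fun z' _ => (h yd' dz' z').symm
  have key : F yd dz * (∑ z', g z') * ((∑ yd', ∑ dz', F yd' dz') * g z)
      = F yd dz * g z * ((∑ yd', ∑ dz', F yd' dz') * (∑ z', g z')) := by ring
  rw [hq, hr, key, ht, mul_one]
lemma expect_obs {Q : ProbMass (Latent 𝒴 D Z)} {P : ProbMass (Obs 𝒴 D Z)}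
    (hR : Rationalizes Q P) (f : Obs 𝒴 D Z → ℝ) :
    ∑ o, P.mass o * f o = ∑ ω, Q.mass ω * f (Tmap ω) := by
  classical
  have h1 : ∀ o, P.mass o * f o = ∑ ω, if Tmap ω = o then Q.mass ω * f o else 0 := by
    intro o
    rw [hR o, pr_def, Finset.sum_mul]
    apply Finset.sum_congr rfl; intro ω _
    by_cases h : Tmap ω = o <;> simp [h]
  calc ∑ o, P.mass o * f o = ∑ o, ∑ ω, if Tmap ω = o then Q.mass ω * f o else 0 :=
        Finset.sum_congr rfl fun o _ => h1 o
    _ = ∑ ω, ∑ o, if Tmap ω = o then Q.mass ω * f o else 0 := Finset.sum_comm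
    _ = ∑ ω, Q.mass ω * f (Tmap ω) := by
        apply Finset.sum_congr rfl; intro ω _
        rw [Finset.sum_eq_single (Tmap ω)]
        · simp
        · intro b _ hb; simp [Ne.symm hb]
        · intro h; exact absurd (Finset.mem_univ _) h

lemma pr_as_expect {α : Type} [Fintype α] (Q : ProbMass α) (p : α → Prop) [DecidablePred p] :
    pr Q {a | p a} = ∑ a, Q.mass a * (if p a then (1:ℝ) else 0) := by
  rw [pr_def]
  apply Finset.sum_congr rfl; intro a _
  by_cases h : p a <;> simp [h]

/-- `π_{d|z}` computed from the latent treatment margins. -/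
noncomputable def piQ (Q : ProbMass (Latent 𝒴 D Z)) (d : D) (z : Z) : ℝ :=
  ∑ yd, ∑ dz, if dz z = d then qm Q yd dz else 0

/-- numerator of `β_{d|z}` computed from the latent margins. -/
noncomputable def abQ (Q : ProbMass (Latent 𝒴 D Z)) (d : D) (z : Z) : ℝ :=
  ∑ yd, ∑ dz, if dz z = d then qm Q yd dz * (yd d : ℝ) else 0

lemma piQ_nonneg (Q : ProbMass (Latent 𝒴 D Z)) (d : D) (z : Z) : 0 ≤ piQ Q d z :=
  Finset.sum_nonneg fun yd _ => Finset.sum_nonneg fun dz _ => by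
    by_cases h : dz z = d <;> simp [h, qm_nonneg]

lemma piQ_le_one (Q : ProbMass (Latent 𝒴 D Z)) (d : D) (z : Z) : piQ Q d z ≤ 1 := by
  rw [← sum_qm Q]
  apply Finset.sum_le_sum; intro yd _
  apply Finset.sum_le_sum; intro dz _
  by_cases h : dz z = d <;> simp [h, qm_nonneg]

section withQ

variable {Q : ProbMass (Latent 𝒴 D Z)} {P : ProbMass (Obs 𝒴 D Z)}
  (hE : Exog Q) (hR : Rationalizes Q P)

include hE hR

omit hE in
lemma prZ_eq : ∀ z, prZ P z = rm Q z := by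
  intro z
  classical
  unfold prZ
  rw [pr_as_expect P (fun o : Obs 𝒴 D Z => o.2.2 = z), expect_obs hR, sum_latent]
  unfold rm
  apply Finset.sum_congr rfl; intro yd _
  apply Finset.sum_congr rfl; intro dz _
  rw [Finset.sum_eq_single z]
  · simp [Tmap]
  · intro b _ hb; simp [Tmap, hb]
  · intro h; exact absurd (Finset.mem_univ _) h

lemma prD_eq (d : D) (z : Z) :
    pr P {o | o.2.1 = d ∧ o.2.2 = z} = piQ Q d z * rm Q z := by
  classical
  rw [pr_as_expect P (fun o : Obs 𝒴 D Z => o.2.1 = d ∧ o.2.2 = z), expect_obs hR, sum_latent]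
  unfold piQ
  rw [Finset.sum_mul]
  apply Finset.sum_congr rfl; intro yd _
  rw [Finset.sum_mul]
  apply Finset.sum_congr rfl; intro dz _
  rw [Finset.sum_eq_single z]
  · by_cases h : dz z = d <;>
      simp [Tmap, h, mass_factor hE]
  · intro b _ hb; simp [Tmap, hb]
  · intro h; exact absurd (Finset.mem_univ _) h

lemma condD_eq (d : D) (z : Z) (hz : 0 < prZ P z) : condD P d z = piQ Q d z := by
  unfold condD
  rw [prD_eq hE hR, ← prZ_eq hR]
  field_simp

lemma sum_pObs_eq (d : D) (z : Z) (hz : 0 < prZ P z) :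
    ∑ y ∈ 𝒴, pObs P y d z = piQ Q d z := by
  classical
  unfold pObs
  rw [← Finset.sum_div]
  have key : ∑ y ∈ 𝒴, pr P {o : Obs 𝒴 D Z | (o.1 : ℝ) = y ∧ o.2.1 = d ∧ o.2.2 = z}
      = pr P {o : Obs 𝒴 D Z | o.2.1 = d ∧ o.2.2 = z} := by
    have e1 : ∀ y : ℝ, pr P {o : Obs 𝒴 D Z | (o.1 : ℝ) = y ∧ o.2.1 = d ∧ o.2.2 = z}
        = ∑ o, P.mass o * (if (o.1 : ℝ) = y ∧ o.2.1 = d ∧ o.2.2 = z then (1:ℝ) else 0) :=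
      fun y => pr_as_expect P _
    rw [Finset.sum_congr rfl fun y _ => e1 y,
      pr_as_expect P (fun o : Obs 𝒴 D Z => o.2.1 = d ∧ o.2.2 = z), Finset.sum_comm]
    apply Finset.sum_congr rfl; intro o _
    by_cases h : o.2.1 = d ∧ o.2.2 = z
    · rw [Finset.sum_eq_single ((o.1 : ℝ))]
      · simp [h]
      · intro b _ hb; simp [Ne.symm hb]
      · intro hm; exact absurd o.1.2 hm
    · simp [h]
  rw [key, prD_eq hE hR, ← prZ_eq hR]
  field_simp

lemma betaObs_eq (d : D) (z : Z) (hz : 0 < prZ P z) : betaObs P d z = abQ Q d z := by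
  classical
  unfold betaObs _root_.expect
  have key : ∑ o : Obs 𝒴 D Z, P.mass o * (if o.2.1 = d ∧ o.2.2 = z then (o.1 : ℝ) else 0)
      = abQ Q d z * rm Q z := by
    rw [expect_obs hR, sum_latent]
    unfold abQ
    rw [Finset.sum_mul]
    apply Finset.sum_congr rfl; intro yd _
    rw [Finset.sum_mul]
    apply Finset.sum_congr rfl; intro dz _
    rw [Finset.sum_eq_single z]
    · by_cases h : dz z = d
      · simp only [Tmap, h, and_self, if_true, mass_factor hE, if_pos]
        ring
      · simp [Tmap, h, mass_factor hE]
    · intro b _ hb; simp [Tmap, hb]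
    · intro h; exact absurd (Finset.mem_univ _) h
  rw [key, ← prZ_eq hR]
  field_simp

end withQ

lemma theta_eq (Q : ProbMass (Latent 𝒴 D Z)) (d : D) :
    theta Q d = ∑ yd, ∑ dz, qm Q yd dz * (yd d : ℝ) := by
  unfold theta _root_.expect
  rw [sum_latent]
  apply Finset.sum_congr rfl; intro yd _
  apply Finset.sum_congr rfl; intro dz _
  show ∑ z, Q.mass (yd, dz, z) * ((yd d : ℝ)) = qm Q yd dz * ((yd d) : ℝ)
  rw [← Finset.sum_mul]
  rfl
lemma maxenc_qm {Q : ProbMass (Latent 𝒴 D Z)} {d : D} {zs : Z} (h : MaxEnc Q d zs) :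
    ∀ (yd : D → ↥𝒴) (dz : Z → D), dz zs ≠ d → (∃ z', dz z' = d) → qm Q yd dz = 0 := by
  classical
  unfold MaxEnc at h
  rw [pr_def] at h
  have h0 := fun ω => sum_zero_on h
    (fun ω => by by_cases hω : ω ∈ {ω : Latent 𝒴 D Z | ω.2.1 zs ≠ d ∧ ∃ z', ω.2.1 z' = d} <;>
      simp [hω, Q.nonneg]) ω
  intro yd dz hne hex
  unfold qm
  apply Finset.sum_eq_zero
  intro z _
  have := h0 (yd, dz, z)
  rwa [if_pos (show (yd, dz, z) ∈
    {ω : Latent 𝒴 D Z | ω.2.1 zs ≠ d ∧ ∃ z', ω.2.1 z' = d} from ⟨hne, hex⟩)] at this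

lemma key_mono {Q : ProbMass (Latent 𝒴 D Z)} {P : ProbMass (Obs 𝒴 D Z)}
    (hE : Exog Q) (hR : Rationalizes Q P) (hM : GenMono Q)
    (hP : ∀ z, 0 < prZ P z) (zstar : D → Z)
    (hzstar : ∀ (d : D) (z : Z), condD P d z ≤ condD P d (zstar d)) (d : D) :
    ∀ (yd : D → ↥𝒴) (dz : Z → D), qm Q yd dz ≠ 0 → ∀ z', dz z' = d → dz (zstar d) = d := by
  classical
  obtain ⟨zs, hzs⟩ := hM d
  have hmz := maxenc_qm hzs
  set zt := zstar d with hzt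
  have hle : piQ Q d zs ≤ piQ Q d zt := by
    rw [← condD_eq hE hR d zs (hP zs), ← condD_eq hE hR d zt (hP zt)]
    exact hzstar d zs
  -- the maximizer probability is carried entirely by {dz zs = d ∧ dz zt = d}
  have hBzt : piQ Q d zt = ∑ yd, ∑ dz, if dz zs = d ∧ dz zt = d then qm Q yd dz else 0 := by
    unfold piQ
    apply Finset.sum_congr rfl; intro yd _
    apply Finset.sum_congr rfl; intro dz _
    by_cases h1 : dz zt = d
    · by_cases h2 : dz zs = d
      · simp [h1, h2]
      · simp only [h1, if_pos, h2, false_and, if_neg, not_false_iff]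
        exact hmz yd dz h2 ⟨zt, h1⟩
    · simp [h1]
  have hsplit : piQ Q d zs
      = (∑ yd, ∑ dz, if dz zs = d ∧ dz zt = d then qm Q yd dz else 0)
        + ∑ yd, ∑ dz, if dz zs = d ∧ ¬ dz zt = d then qm Q yd dz else 0 := by
    unfold piQ
    rw [← Finset.sum_add_distrib]
    apply Finset.sum_congr rfl; intro yd _
    rw [← Finset.sum_add_distrib]
    apply Finset.sum_congr rfl; intro dz _
    by_cases h1 : dz zs = d <;> by_cases h2 : dz zt = d <;> simp [h1, h2]
  have hXnn : ∀ (yd : D → ↥𝒴) (dz : Z → D),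
      0 ≤ if dz zs = d ∧ ¬ dz zt = d then qm Q yd dz else 0 := by
    intro yd dz
    by_cases h : dz zs = d ∧ ¬ dz zt = d <;> simp [h, qm_nonneg]
  have hX0 : ∑ yd, ∑ dz, (if dz zs = d ∧ ¬ dz zt = d then qm Q yd dz else 0) = 0 := by
    have hge : 0 ≤ ∑ yd, ∑ dz, (if dz zs = d ∧ ¬ dz zt = d then qm Q yd dz else 0) :=
      Finset.sum_nonneg fun yd _ => Finset.sum_nonneg fun dz _ => hXnn yd dz
    have : piQ Q d zt + ∑ yd, ∑ dz, (if dz zs = d ∧ ¬ dz zt = d then qm Q yd dz else 0)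
        ≤ piQ Q d zt := by rw [← hBzt] at hsplit; rw [← hsplit]; exact hle
    linarith
  have hterm : ∀ (yd : D → ↥𝒴) (dz : Z → D),
      (if dz zs = d ∧ ¬ dz zt = d then qm Q yd dz else 0) = 0 := by
    intro yd dz
    have h1 := sum_zero_on hX0
      (fun yd => Finset.sum_nonneg fun dz _ => hXnn yd dz) yd
    exact sum_zero_on h1 (fun dz => hXnn yd dz) dz
  intro yd dz hq z' hz'
  by_contra hct
  by_cases h2 : dz zs = d
  · have := hterm yd dz
    rw [if_pos ⟨h2, hct⟩] at this
    exact hq this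
  · exact hq (hmz yd dz h2 ⟨z', hz'⟩)
lemma one_sub_piQ (Q : ProbMass (Latent 𝒴 D Z)) (d : D) (z : Z) :
    1 - piQ Q d z = ∑ yd, ∑ dz, (if dz z = d then 0 else qm Q yd dz) := by
  have htot : ∑ yd, ∑ dz, qm Q yd dz
      = piQ Q d z + ∑ yd, ∑ dz, (if dz z = d then 0 else qm Q yd dz) := by
    unfold piQ
    rw [← Finset.sum_add_distrib]
    apply Finset.sum_congr rfl; intro yd _
    rw [← Finset.sum_add_distrib]
    apply Finset.sum_congr rfl; intro dz _
    by_cases h : dz z = d <;> simp [h]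
  rw [sum_qm Q] at htot
  linarith

lemma theta_split (Q : ProbMass (Latent 𝒴 D Z)) (d : D) (z : Z) :
    theta Q d = abQ Q d z + ∑ yd, ∑ dz, (if dz z = d then 0 else qm Q yd dz * (yd d : ℝ)) := by
  rw [theta_eq]
  unfold abQ
  rw [← Finset.sum_add_distrib]
  apply Finset.sum_congr rfl; intro yd _
  rw [← Finset.sum_add_distrib]
  apply Finset.sum_congr rfl; intro dz _
  by_cases h : dz z = d <;> simp [h]

lemma theta_bounds (Q : ProbMass (Latent 𝒴 D Z)) (d : D) (z : Z) (hne : 𝒴.Nonempty) :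
    abQ Q d z + 𝒴.min' hne * (1 - piQ Q d z) ≤ theta Q d ∧
      theta Q d ≤ abQ Q d z + 𝒴.max' hne * (1 - piQ Q d z) := by
  rw [theta_split Q d z, one_sub_piQ Q d z]
  constructor
  · have : 𝒴.min' hne * ∑ yd, ∑ dz, (if dz z = d then 0 else qm Q yd dz)
        ≤ ∑ yd, ∑ dz, (if dz z = d then 0 else qm Q yd dz * (yd d : ℝ)) := by
      rw [Finset.mul_sum]
      apply Finset.sum_le_sum; intro yd _
      rw [Finset.mul_sum]
      apply Finset.sum_le_sum; intro dz _
      by_cases h : dz z = d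
      · simp [h]
      · simp only [h, if_neg, not_false_iff, if_false]
        rw [mul_comm]
        exact mul_le_mul_of_nonneg_left (𝒴.min'_le _ (yd d).2) (qm_nonneg Q yd dz)
    linarith
  · have : ∑ yd, ∑ dz, (if dz z = d then 0 else qm Q yd dz * (yd d : ℝ))
        ≤ 𝒴.max' hne * ∑ yd, ∑ dz, (if dz z = d then 0 else qm Q yd dz) := by
      rw [Finset.mul_sum]
      apply Finset.sum_le_sum; intro yd _
      rw [Finset.mul_sum]
      apply Finset.sum_le_sum; intro dz _
      by_cases h : dz z = d
      · simp [h]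
      · simp only [h, if_neg, not_false_iff, if_false]
        rw [mul_comm (𝒴.max' hne)]
        exact mul_le_mul_of_nonneg_left (𝒴.le_max' _ (yd d).2) (qm_nonneg Q yd dz)
    linarith
/-- Replacement map for potential outcomes: keep `yd d` where `d` is reachable at `zstar d`,
otherwise assign the extreme value selected by `s d`. -/
def psi (zstar : D → Z) (yLs yUs : ↥𝒴) (s : D → Bool) (yd : D → ↥𝒴) (dz : Z → D) : D → ↥𝒴 :=
  fun d => if dz (zstar d) = d then yd d else if s d then yUs else yLs

/-- Product Bernoulli weight of a sign pattern `s`. -/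
noncomputable def wgt (lam : D → ℝ) (s : D → Bool) : ℝ :=
  ∏ d', if s d' then lam d' else 1 - lam d'

/-- The `(Y, D)`-marginal of the mixture construction. -/
noncomputable def mixG (Q : ProbMass (Latent 𝒴 D Z)) (zstar : D → Z) (lam : D → ℝ)
    (yLs yUs : ↥𝒴) (yd : D → ↥𝒴) (dz : Z → D) : ℝ :=
  ∑ s : D → Bool, wgt lam s *
    ∑ yd0, if yd = psi zstar yLs yUs s yd0 dz then qm Q yd0 dz else 0

lemma wgt_nonneg {lam : D → ℝ} (hlam : ∀ d, 0 ≤ lam d ∧ lam d ≤ 1) (s : D → Bool) :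
    0 ≤ wgt lam s := by
  apply Finset.prod_nonneg
  intro d _
  by_cases h : s d <;> simp [h]
  · exact (hlam d).1
  · linarith [(hlam d).2]

lemma sum_wgt {lam : D → ℝ} : ∑ s : D → Bool, wgt lam s = 1 := by
  unfold wgt
  rw [← Fintype.prod_sum (fun d' (b : Bool) => if b then lam d' else 1 - lam d')]
  rw [Finset.prod_eq_one]
  intro d' _
  rw [Fintype.sum_bool, if_pos rfl, if_neg (by simp)]
  ring

lemma mixG_nonneg {Q : ProbMass (Latent 𝒴 D Z)} {zstar : D → Z} {lam : D → ℝ}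
    {yLs yUs : ↥𝒴} (hlam : ∀ d, 0 ≤ lam d ∧ lam d ≤ 1) (yd : D → ↥𝒴) (dz : Z → D) :
    0 ≤ mixG Q zstar lam yLs yUs yd dz := by
  apply Finset.sum_nonneg
  intro s _
  apply mul_nonneg (wgt_nonneg hlam s)
  apply Finset.sum_nonneg
  intro yd0 _
  by_cases h : yd = psi zstar yLs yUs s yd0 dz <;> simp [h, qm_nonneg]

/-- workhorse: expectations against `mixG` for a fixed `dz`. -/
lemma mixG_expect {Q : ProbMass (Latent 𝒴 D Z)} {zstar : D → Z} {lam : D → ℝ}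
    {yLs yUs : ↥𝒴} (dz : Z → D) (f : (D → ↥𝒴) → ℝ) :
    ∑ yd, mixG Q zstar lam yLs yUs yd dz * f yd
      = ∑ s : D → Bool, wgt lam s *
          ∑ yd0, qm Q yd0 dz * f (psi zstar yLs yUs s yd0 dz) := by
  classical
  unfold mixG
  calc ∑ yd, (∑ s : D → Bool, wgt lam s *
        ∑ yd0, if yd = psi zstar yLs yUs s yd0 dz then qm Q yd0 dz else 0) * f yd
      = ∑ yd, ∑ s : D → Bool, ∑ yd0,
          wgt lam s * (if yd = psi zstar yLs yUs s yd0 dz then qm Q yd0 dz else 0) * f yd := by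
        apply Finset.sum_congr rfl; intro yd _
        rw [Finset.sum_mul]
        apply Finset.sum_congr rfl; intro s _
        rw [Finset.mul_sum, Finset.sum_mul]
    _ = ∑ s : D → Bool, ∑ yd0, ∑ yd,
          wgt lam s * (if yd = psi zstar yLs yUs s yd0 dz then qm Q yd0 dz else 0) * f yd := by
        rw [Finset.sum_comm]
        apply Finset.sum_congr rfl; intro s _
        rw [Finset.sum_comm]
    _ = ∑ s : D → Bool, wgt lam s *
          ∑ yd0, qm Q yd0 dz * f (psi zstar yLs yUs s yd0 dz) := by
        apply Finset.sum_congr rfl; intro s _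
        rw [Finset.mul_sum]
        apply Finset.sum_congr rfl; intro yd0 _
        rw [Finset.sum_eq_single (psi zstar yLs yUs s yd0 dz)]
        · simp [mul_assoc]
        · intro b _ hb; simp [hb]
        · intro h; exact absurd (Finset.mem_univ _) h
/-- The mixture construction as a probability mass. -/
noncomputable def mixPM (Q : ProbMass (Latent 𝒴 D Z)) (zstar : D → Z) (lam : D → ℝ)
    (yLs yUs : ↥𝒴) (hlam : ∀ d, 0 ≤ lam d ∧ lam d ≤ 1) : ProbMass (Latent 𝒴 D Z) where
  mass ω := mixG Q zstar lam yLs yUs ω.1 ω.2.1 * rm Q ω.2.2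
  nonneg ω := mul_nonneg (mixG_nonneg hlam _ _) (rm_nonneg Q _)
  total := by
    rw [sum_latent (fun ω : Latent 𝒴 D Z =>
      mixG Q zstar lam yLs yUs ω.1 ω.2.1 * rm Q ω.2.2)]
    calc ∑ yd, ∑ dz, ∑ z, mixG Q zstar lam yLs yUs yd dz * rm Q z
        = ∑ yd, ∑ dz, mixG Q zstar lam yLs yUs yd dz * 1 := by
          apply Finset.sum_congr rfl; intro yd _
          apply Finset.sum_congr rfl; intro dz _
          rw [← Finset.mul_sum, sum_rm]
      _ = ∑ dz, ∑ yd, mixG Q zstar lam yLs yUs yd dz * 1 := Finset.sum_comm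
      _ = ∑ dz, ∑ s : D → Bool, wgt lam s * ∑ yd0, qm Q yd0 dz * 1 :=
          Finset.sum_congr rfl fun dz _ => mixG_expect dz (fun _ => (1:ℝ))
      _ = ∑ s : D → Bool, ∑ dz, wgt lam s * ∑ yd0, qm Q yd0 dz * 1 := Finset.sum_comm
      _ = ∑ s : D → Bool, wgt lam s * 1 := by
          apply Finset.sum_congr rfl; intro s _
          rw [← Finset.mul_sum]
          congr 1
          rw [Finset.sum_comm]
          simp only [mul_one]
          exact sum_qm Q
      _ = 1 := by simp only [mul_one]; exact sum_wgt

/-- workhorse: expectations under the mixture measure. -/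
lemma mix_expect {Q : ProbMass (Latent 𝒴 D Z)} {zstar : D → Z} {lam : D → ℝ}
    {yLs yUs : ↥𝒴} (hlam : ∀ d, 0 ≤ lam d ∧ lam d ≤ 1) (hE : Exog Q)
    (f : Latent 𝒴 D Z → ℝ) :
    ∑ ω, (mixPM Q zstar lam yLs yUs hlam).mass ω * f ω
      = ∑ s : D → Bool, wgt lam s *
          ∑ ω, Q.mass ω * f (psi zstar yLs yUs s ω.1 ω.2.1, ω.2.1, ω.2.2) := by
  classical
  rw [sum_latent (fun ω : Latent 𝒴 D Z => (mixPM Q zstar lam yLs yUs hlam).mass ω * f ω)]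
  have hRHS : ∀ s, ∑ ω, Q.mass ω * f (psi zstar yLs yUs s ω.1 ω.2.1, ω.2.1, ω.2.2)
      = ∑ yd0, ∑ dz, ∑ z, qm Q yd0 dz * rm Q z * f (psi zstar yLs yUs s yd0 dz, dz, z) := by
    intro s
    rw [sum_latent (fun ω : Latent 𝒴 D Z =>
      Q.mass ω * f (psi zstar yLs yUs s ω.1 ω.2.1, ω.2.1, ω.2.2))]
    apply Finset.sum_congr rfl; intro yd0 _
    apply Finset.sum_congr rfl; intro dz _
    apply Finset.sum_congr rfl; intro z _
    rw [mass_factor hE]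
  calc ∑ yd, ∑ dz, ∑ z, mixG Q zstar lam yLs yUs yd dz * rm Q z * f (yd, dz, z)
      = ∑ dz, ∑ yd, ∑ z, mixG Q zstar lam yLs yUs yd dz * rm Q z * f (yd, dz, z) :=
        Finset.sum_comm
    _ = ∑ dz, ∑ z, ∑ yd, mixG Q zstar lam yLs yUs yd dz * (rm Q z * f (yd, dz, z)) := by
        apply Finset.sum_congr rfl; intro dz _
        rw [Finset.sum_comm]
        apply Finset.sum_congr rfl; intro z _
        apply Finset.sum_congr rfl; intro yd _
        rw [mul_assoc]
    _ = ∑ dz, ∑ z, ∑ s : D → Bool, wgt lam s *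
          ∑ yd0, qm Q yd0 dz * (rm Q z * f (psi zstar yLs yUs s yd0 dz, dz, z)) := by
        apply Finset.sum_congr rfl; intro dz _
        apply Finset.sum_congr rfl; intro z _
        exact mixG_expect dz (fun yd => rm Q z * f (yd, dz, z))
    _ = ∑ s : D → Bool, ∑ dz, ∑ z, wgt lam s *
          ∑ yd0, qm Q yd0 dz * (rm Q z * f (psi zstar yLs yUs s yd0 dz, dz, z)) :=
        (Finset.sum_congr rfl fun dz _ => Finset.sum_comm).trans Finset.sum_comm
    _ = ∑ s : D → Bool, wgt lam s *
          ∑ yd0, ∑ dz, ∑ z, qm Q yd0 dz * rm Q z * f (psi zstar yLs yUs s yd0 dz, dz, z) := by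
        apply Finset.sum_congr rfl; intro s _
        have pull : ∑ dz, ∑ z, wgt lam s *
              (∑ yd0, qm Q yd0 dz * (rm Q z * f (psi zstar yLs yUs s yd0 dz, dz, z)))
            = wgt lam s * ∑ dz, ∑ z,
              ∑ yd0, qm Q yd0 dz * (rm Q z * f (psi zstar yLs yUs s yd0 dz, dz, z)) := by
          rw [Finset.mul_sum]
          apply Finset.sum_congr rfl; intro dz _
          rw [Finset.mul_sum]
        rw [pull]
        congr 1
        calc ∑ dz, ∑ z, ∑ yd0, qm Q yd0 dz * (rm Q z * f (psi zstar yLs yUs s yd0 dz, dz, z))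
            = ∑ dz, ∑ yd0, ∑ z, qm Q yd0 dz * (rm Q z * f (psi zstar yLs yUs s yd0 dz, dz, z)) :=
              Finset.sum_congr rfl fun dz _ => Finset.sum_comm
          _ = ∑ yd0, ∑ dz, ∑ z, qm Q yd0 dz * (rm Q z * f (psi zstar yLs yUs s yd0 dz, dz, z)) :=
              Finset.sum_comm
          _ = ∑ yd0, ∑ dz, ∑ z, qm Q yd0 dz * rm Q z * f (psi zstar yLs yUs s yd0 dz, dz, z) := by
              apply Finset.sum_congr rfl; intro _ _
              apply Finset.sum_congr rfl; intro _ _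
              apply Finset.sum_congr rfl; intro _ _
              rw [mul_assoc]
    _ = ∑ s : D → Bool, wgt lam s *
          ∑ ω, Q.mass ω * f (psi zstar yLs yUs s ω.1 ω.2.1, ω.2.1, ω.2.2) := by
        exact Finset.sum_congr rfl fun s _ => by rw [hRHS s]
lemma sum_wgt_val {lam : D → ℝ} (d : D) (a b : ℝ) :
    ∑ s : D → Bool, wgt lam s * (if s d then a else b) = lam d * a + (1 - lam d) * b := by
  classical
  have step1 : ∀ s : D → Bool, wgt lam s * (if s d then a else b)
      = ∏ d', ((if s d' then lam d' else 1 - lam d') *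
          (if d' = d then (if s d' then a else b) else 1)) := by
    intro s
    rw [Finset.prod_mul_distrib]
    unfold wgt
    congr 1
    rw [Finset.prod_ite_eq' Finset.univ d (fun d' => if s d' then a else b)]
    simp
  rw [Finset.sum_congr rfl fun s _ => step1 s]
  rw [← Fintype.prod_sum (fun d' (t : Bool) => (if t then lam d' else 1 - lam d') *
      (if d' = d then (if t then a else b) else 1))]
  have step2 : ∀ d', (∑ t : Bool, (if t then lam d' else 1 - lam d') *
      (if d' = d then (if t then a else b) else 1))
      = if d' = d then lam d' * a + (1 - lam d') * b else 1 := by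
    intro d'
    rw [Fintype.sum_bool]
    by_cases h : d' = d <;> simp [h] <;> ring
  rw [Finset.prod_congr rfl fun d' _ => step2 d']
  rw [Finset.prod_ite_eq' Finset.univ d (fun d' => lam d' * a + (1 - lam d') * b)]
  simp

section mixprops

variable {Q : ProbMass (Latent 𝒴 D Z)} {P : ProbMass (Obs 𝒴 D Z)}
  {zstar : D → Z} {lam : D → ℝ} {yLs yUs : ↥𝒴}
  (hlam : ∀ d, 0 ≤ lam d ∧ lam d ≤ 1) (hE : Exog Q)

include hlam hE

omit hE in
lemma mix_exog : Exog (mixPM Q zstar lam yLs yUs hlam) :=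
  exog_of_factor (fun yd dz => mixG Q zstar lam yLs yUs yd dz) (rm Q) (fun _ _ _ => rfl)

lemma mix_marg (dz : Z → D) :
    pr (mixPM Q zstar lam yLs yUs hlam) {ω | ω.2.1 = dz} = pr Q {ω | ω.2.1 = dz} := by
  classical
  rw [pr_as_expect (mixPM Q zstar lam yLs yUs hlam) (fun ω : Latent 𝒴 D Z => ω.2.1 = dz),
    mix_expect hlam hE (fun ω : Latent 𝒴 D Z => if ω.2.1 = dz then (1:ℝ) else 0),
    pr_as_expect Q (fun ω : Latent 𝒴 D Z => ω.2.1 = dz)]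
  have : ∀ s : D → Bool, (∑ ω : Latent 𝒴 D Z, Q.mass ω *
      (if (psi zstar yLs yUs s ω.1 ω.2.1, ω.2.1, ω.2.2).2.1 = dz then (1:ℝ) else 0))
      = ∑ ω : Latent 𝒴 D Z, Q.mass ω * (if ω.2.1 = dz then (1:ℝ) else 0) := fun s => rfl
  rw [Finset.sum_congr rfl fun s _ => by rw [this s]]
  rw [← Finset.sum_mul, sum_wgt, one_mul]

omit hlam hE in
lemma qm_ne_zero_of_mass {yd : D → ↥𝒴} {dz : Z → D} {z : Z}
    (h : Q.mass (yd, dz, z) ≠ 0) : qm Q yd dz ≠ 0 := by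
  intro h0
  exact h (sum_zero_on h0 (fun z' => Q.nonneg _) z)

lemma mix_rationalizes (hR : Rationalizes Q P) (hM : GenMono Q)
    (hP : ∀ z, 0 < prZ P z)
    (hzstar : ∀ (d : D) (z : Z), condD P d z ≤ condD P d (zstar d)) :
    Rationalizes (mixPM Q zstar lam yLs yUs hlam) P := by
  classical
  intro o
  rw [hR o]
  have e1 : pr (mixPM Q zstar lam yLs yUs hlam) {ω | Tmap ω = o}
      = ∑ s : D → Bool, wgt lam s * ∑ ω, Q.mass ω *
        (if Tmap (psi zstar yLs yUs s ω.1 ω.2.1, ω.2.1, ω.2.2) = o then (1:ℝ) else 0) := by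
    rw [pr_as_expect (mixPM Q zstar lam yLs yUs hlam) (fun ω : Latent 𝒴 D Z => Tmap ω = o),
      mix_expect hlam hE (fun ω : Latent 𝒴 D Z => if Tmap ω = o then (1:ℝ) else 0)]
  rw [e1]
  have e2 : ∀ s : D → Bool, ∀ ω : Latent 𝒴 D Z, Q.mass ω *
      (if Tmap (psi zstar yLs yUs s ω.1 ω.2.1, ω.2.1, ω.2.2) = o then (1:ℝ) else 0)
      = Q.mass ω * (if Tmap ω = o then (1:ℝ) else 0) := by
    intro s ω
    by_cases hm : Q.mass ω = 0
    · rw [hm, zero_mul, zero_mul]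
    · obtain ⟨yd, dz, z⟩ := ω
      have hqm : qm Q yd dz ≠ 0 := qm_ne_zero_of_mass hm
      have hkey : dz (zstar (dz z)) = dz z :=
        key_mono hE hR hM hP zstar hzstar (dz z) yd dz hqm z rfl
      have : Tmap (psi zstar yLs yUs s yd dz, dz, z) = Tmap (yd, dz, z) := by
        unfold Tmap psi
        simp only [hkey, if_pos]
      rw [this]
  rw [Finset.sum_congr rfl fun s _ => by
    rw [Finset.sum_congr rfl fun ω _ => e2 s ω]]
  rw [← Finset.sum_mul, sum_wgt, one_mul,
    pr_as_expect Q (fun ω : Latent 𝒴 D Z => Tmap ω = o)]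

lemma mix_theta (d : D) :
    theta (mixPM Q zstar lam yLs yUs hlam) d
      = abQ Q d (zstar d)
        + (lam d * (yUs : ℝ) + (1 - lam d) * (yLs : ℝ)) * (1 - piQ Q d (zstar d)) := by
  classical
  have h0 : theta (mixPM Q zstar lam yLs yUs hlam) d
      = ∑ s : D → Bool, wgt lam s * ∑ ω, Q.mass ω *
          ((psi zstar yLs yUs s ω.1 ω.2.1 d : ℝ)) := by
    unfold theta _root_.expect
    exact mix_expect hlam hE (fun ω : Latent 𝒴 D Z => (ω.1 d : ℝ))
  have h1 : ∀ s : D → Bool, ∀ ω : Latent 𝒴 D Z,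
      Q.mass ω * ((psi zstar yLs yUs s ω.1 ω.2.1 d : ℝ))
      = Q.mass ω * (if ω.2.1 (zstar d) = d then (ω.1 d : ℝ) else 0)
        + (if s d then (yUs : ℝ) else (yLs : ℝ)) *
            (Q.mass ω * (if ω.2.1 (zstar d) = d then 0 else 1)) := by
    intro s ω
    unfold psi
    by_cases h : ω.2.1 (zstar d) = d
    · simp [h]
    · by_cases hs : s d <;> simp [h, hs] <;> ring
  have hA : ∑ ω : Latent 𝒴 D Z, Q.mass ω * (if ω.2.1 (zstar d) = d then (ω.1 d : ℝ) else 0)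
      = abQ Q d (zstar d) := by
    rw [sum_latent (fun ω : Latent 𝒴 D Z =>
      Q.mass ω * (if ω.2.1 (zstar d) = d then (ω.1 d : ℝ) else 0))]
    unfold abQ
    apply Finset.sum_congr rfl; intro yd _
    apply Finset.sum_congr rfl; intro dz _
    show (∑ z, Q.mass (yd, dz, z) * (if dz (zstar d) = d then ((yd d : ℝ)) else 0)) = _
    rw [← Finset.sum_mul]
    by_cases h : dz (zstar d) = d <;> simp [h, qm]
  have hB : ∑ ω : Latent 𝒴 D Z, Q.mass ω * (if ω.2.1 (zstar d) = d then (0:ℝ) else 1)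
      = 1 - piQ Q d (zstar d) := by
    rw [sum_latent (fun ω : Latent 𝒴 D Z =>
      Q.mass ω * (if ω.2.1 (zstar d) = d then (0:ℝ) else 1)), one_sub_piQ Q d (zstar d)]
    apply Finset.sum_congr rfl; intro yd _
    apply Finset.sum_congr rfl; intro dz _
    show (∑ z, Q.mass (yd, dz, z) * (if dz (zstar d) = d then (0:ℝ) else 1)) = _
    rw [← Finset.sum_mul]
    by_cases h : dz (zstar d) = d <;> simp [h, qm]
  have h2 : ∀ s : D → Bool, ∑ ω, Q.mass ω * ((psi zstar yLs yUs s ω.1 ω.2.1 d : ℝ))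
      = abQ Q d (zstar d)
        + (if s d then (yUs : ℝ) else (yLs : ℝ)) * (1 - piQ Q d (zstar d)) := by
    intro s
    rw [Finset.sum_congr rfl fun ω _ => h1 s ω, Finset.sum_add_distrib, hA,
      ← Finset.mul_sum, hB]
  rw [h0, Finset.sum_congr rfl fun s _ => by rw [h2 s]]
  rw [Finset.sum_congr rfl fun s _ => mul_add (wgt lam s) _ _, Finset.sum_add_distrib,
    ← Finset.sum_mul, sum_wgt, one_mul]
  congr 1
  have : ∀ s : D → Bool, wgt lam s * ((if s d then (yUs : ℝ) else (yLs : ℝ))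
      * (1 - piQ Q d (zstar d)))
      = (wgt lam s * (if s d then (yUs : ℝ) else (yLs : ℝ))) * (1 - piQ Q d (zstar d)) := by
    intro s; ring
  rw [Finset.sum_congr rfl fun s _ => this s, ← Finset.sum_mul, sum_wgt_val]

end mixprops

/-- Theorem 3.2: the identified set for the vector of average potential
outcomes is the product over `d` of the closed intervals
`[β_{d|z*(d)} + y^L(1 − Σ_y p_{yd|z*(d)}), β_{d|z*(d)} + y^U(1 − Σ_y p_{yd|z*(d)})]`. -/
theorem identified_set_product_of_intervals
    (𝒴 : Finset ℝ) (h𝒴 : 2 ≤ 𝒴.card)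
    (D Z : Type) [Fintype D] [DecidableEq D] [Nontrivial D]
    [Fintype Z] [DecidableEq Z] [Nontrivial Z]
    (QQ : Set (ProbMass (Latent 𝒴 D Z)))
    (hsub : ∀ Q ∈ QQ, Exog Q ∧ GenMono Q)
    (hU : UnrestrictedPO QQ)
    (P : ProbMass (Obs 𝒴 D Z))
    (hP : ∀ z : Z, 0 < prZ P z)
    (hne : (Q0 P QQ).Nonempty)
    (zstar : D → Z)
    (hzstar : ∀ (d : D) (z : Z), condD P d z ≤ condD P d (zstar d)) :
    Theta0 P QQ = Set.univ.pi (fun d : D =>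
      Set.Icc
        (betaObs P d (zstar d)
          + 𝒴.min' (Finset.card_pos.mp (by omega)) * (1 - ∑ y ∈ 𝒴, pObs P y d (zstar d)))
        (betaObs P d (zstar d)
          + 𝒴.max' (Finset.card_pos.mp (by omega)) * (1 - ∑ y ∈ 𝒴, pObs P y d (zstar d)))) := by
  have hYne : 𝒴.Nonempty := Finset.card_pos.mp (by omega)
  have hLU : 𝒴.min' hYne < 𝒴.max' hYne := Finset.min'_lt_max'_of_card 𝒴 (by omega)
  ext x
  constructor
  · rintro ⟨Q, ⟨hQQ, hR⟩, rfl⟩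
    intro d _
    have hE := (hsub Q hQQ).1
    have hb := theta_bounds Q d (zstar d) hYne
    rw [Set.mem_Icc, betaObs_eq hE hR d (zstar d) (hP (zstar d)),
      sum_pObs_eq hE hR d (zstar d) (hP (zstar d))]
    exact ⟨hb.1, hb.2⟩
  · intro hx
    obtain ⟨Q, hQQ, hR⟩ := hne
    have hE := (hsub Q hQQ).1
    have hM := (hsub Q hQQ).2
    set yL : ℝ := 𝒴.min' hYne with hyL
    set yU : ℝ := 𝒴.max' hYne with hyU
    have hxb : ∀ d : D, abQ Q d (zstar d) + yL * (1 - piQ Q d (zstar d)) ≤ x d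
        ∧ x d ≤ abQ Q d (zstar d) + yU * (1 - piQ Q d (zstar d)) := by
      intro d
      have := hx d (Set.mem_univ d)
      rw [Set.mem_Icc, betaObs_eq hE hR d (zstar d) (hP (zstar d)),
        sum_pObs_eq hE hR d (zstar d) (hP (zstar d))] at this
      exact this
    set cc : D → ℝ := fun d => if 1 - piQ Q d (zstar d) = 0 then yL
      else (x d - abQ Q d (zstar d)) / (1 - piQ Q d (zstar d)) with hcc
    have hpinn : ∀ d : D, 0 ≤ 1 - piQ Q d (zstar d) := by
      intro d
      have := piQ_le_one Q d (zstar d)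
      linarith
    have hccb : ∀ d : D, yL ≤ cc d ∧ cc d ≤ yU := by
      intro d
      by_cases h : 1 - piQ Q d (zstar d) = 0
      · simp only [hcc, h, if_pos]
        exact ⟨le_refl _, le_of_lt hLU⟩
      · have hpos : 0 < 1 - piQ Q d (zstar d) := lt_of_le_of_ne (hpinn d) (Ne.symm h)
        simp only [hcc, h, if_neg, not_false_iff]
        constructor
        · rw [le_div_iff₀ hpos]
          have := (hxb d).1
          linarith
        · rw [div_le_iff₀ hpos]
          have := (hxb d).2
          linarith
    set lam : D → ℝ := fun d => (cc d - yL) / (yU - yL) with hlamdef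
    have hlam : ∀ d, 0 ≤ lam d ∧ lam d ≤ 1 := by
      intro d
      constructor
      · exact div_nonneg (by linarith [(hccb d).1]) (by linarith)
      · rw [div_le_one (by linarith)]
        linarith [(hccb d).2]
    have hccval : ∀ d, lam d * yU + (1 - lam d) * yL = cc d := by
      intro d
      have h1 : lam d * (yU - yL) = cc d - yL := by
        rw [hlamdef]
        exact div_mul_cancel₀ _ (by linarith)
      ring_nf
      ring_nf at h1
      linarith
    set Q' : ProbMass (Latent 𝒴 D Z) :=
      mixPM Q zstar lam ⟨yL, 𝒴.min'_mem hYne⟩ ⟨yU, 𝒴.max'_mem hYne⟩ hlam with hQ'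
    have hQ'QQ : Q' ∈ QQ :=
      hU Q hQQ Q' (mix_exog hlam) (fun dz => mix_marg hlam hE dz)
    have hQ'R : Rationalizes Q' P := mix_rationalizes hlam hE hR hM hP hzstar
    refine ⟨Q', ⟨hQ'QQ, hQ'R⟩, funext fun d => ?_⟩
    rw [hQ', mix_theta hlam hE d]
    show abQ Q d (zstar d) + (lam d * yU + (1 - lam d) * yL) * (1 - piQ Q d (zstar d)) = x d
    rw [hccval d]
    by_cases h : 1 - piQ Q d (zstar d) = 0
    · rw [h, mul_zero, add_zero]
      have h1 := (hxb d).1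
      have h2 := (hxb d).2
      rw [h, mul_zero, add_zero] at h1 h2
      linarith
    · simp only [hcc, h, if_neg, not_false_iff]
      rw [div_mul_cancel₀ _ h]
      ring
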